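/- For all n ≥ 2, F_n(321,231;q) = (1+q)·F_{n-1}(321,231;q) + (1−q)·F_{n-2}(321,231;q), where F_m(321,231;q) = Σ_{σ ∈ S_m(321,231)} q^{crs(σ)} and S_m(321,231) is the set of permutations of [m] avoiding both patterns 321 and 231. -/

import Mathlib

open scoped Classical

/-- The number of crossings of a permutation: pairs (i,j) with
i < j < σ(i) < σ(j) or σ(i) < σ(j) ≤ i < j. -/
noncomputable def crs {n : ℕ} (σ : Equiv.Perm (Fin n)) : ℕ :=
  (Finset.univ.filter (fun p : Fin n × Fin n =>
    (p.1 < p.2 ∧ p.2 < σ p.1 ∧ σ p.1 < σ p.2) ∨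
    (σ p.1 < σ p.2 ∧ σ p.2 ≤ p.1 ∧ p.1 < p.2))).card

/-- Number of upper transients: i with σ⁻¹(i) < i < σ(i). -/
noncomputable def utCount {n : ℕ} (σ : Equiv.Perm (Fin n)) : ℕ :=
  (Finset.univ.filter (fun i : Fin n => σ.symm i < i ∧ i < σ i)).card

/-- Number of lower transients: i with σ(i) < i < σ⁻¹(i). -/
noncomputable def ltCount {n : ℕ} (σ : Equiv.Perm (Fin n)) : ℕ :=
  (Finset.univ.filter (fun i : Fin n => σ i < i ∧ i < σ.symm i)).card

/-- σ contains the pattern τ. -/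
def Contains {n k : ℕ} (σ : Equiv.Perm (Fin n)) (τ : Fin k → ℕ) : Prop :=
  ∃ f : Fin k → Fin n, StrictMono f ∧ ∀ x y, σ (f x) < σ (f y) ↔ τ x < τ y

/-- σ avoids the pattern τ. -/
def Avoids {n k : ℕ} (σ : Equiv.Perm (Fin n)) (τ : Fin k → ℕ) : Prop :=
  ¬ Contains σ τ

def p123 : Fin 3 → ℕ := ![1, 2, 3]
def p132 : Fin 3 → ℕ := ![1, 3, 2]
def p213 : Fin 3 → ℕ := ![2, 1, 3]
def p231 : Fin 3 → ℕ := ![2, 3, 1]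
def p312 : Fin 3 → ℕ := ![3, 1, 2]
def p321 : Fin 3 → ℕ := ![3, 2, 1]

/-- Generating polynomial of crs over permutations of [n] satisfying P. -/
noncomputable def Fpoly (n : ℕ) (P : Equiv.Perm (Fin n) → Prop) : Polynomial ℤ :=
  ∑ σ : Equiv.Perm (Fin n), if P σ then Polynomial.X ^ crs σ else 0

/-!
A permutation avoids 321 and 231 iff no entry is preceded by two larger entries. If such a
σ ∈ S_{n+1} has its maximum at position m, every later entry exceeds every entry other than the
maximum before it, and counting the smaller values forces σ = τ ⊕ β_k, the direct sum of some
τ ∈ S_m(321, 231) with the block β_k = (k+1) 1 2 ⋯ k, where k = n - m. Crossings are additive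
under direct sums and β_k has k - 1 of them (truncated at 0), so
F_{n+1} = Σ_{m ≤ n} q^(n-m-1) F_m; subtracting q times this identity for n from the one for
n + 1 gives the recurrence.
-/

open Equiv Finset

def NoTwoLargerBefore {n : ℕ} (σ : Perm (Fin n)) : Prop :=
  ∀ ⦃i₁ i₂ j : Fin n⦄, i₁ < i₂ → i₂ < j → ¬(σ j < σ i₁ ∧ σ j < σ i₂)

theorem NoTwoLargerBefore.avoids {n : ℕ} {σ : Perm (Fin n)} (hσ : NoTwoLargerBefore σ)
    {τ : Fin 3 → ℕ} (h₀ : τ 2 < τ 0) (h₁ : τ 2 < τ 1) : Avoids σ τ :=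
  fun ⟨_, hf, hτ⟩ => hσ (hf (by decide)) (hf (by decide)) ⟨(hτ 2 0).2 h₀, (hτ 2 1).2 h₁⟩

theorem avoids_321_and_231_iff {n : ℕ} (σ : Perm (Fin n)) :
    Avoids σ p321 ∧ Avoids σ p231 ↔ NoTwoLargerBefore σ := by
  refine ⟨fun ⟨h321, h231⟩ i₁ i₂ j h₁₂ h₂ ⟨h₁, h₂'⟩ => ?_,
    fun h => ⟨h.avoids (by decide) (by decide), h.avoids (by decide) (by decide)⟩⟩
  have hf : StrictMono ![i₁, i₂, j] := by
    simp [Fin.strictMono_iff_lt_succ, Fin.forall_fin_two, h₁₂, h₂]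
  rcases lt_or_gt_of_ne (σ.injective.ne h₁₂.ne) with h | h
  · refine h231 ⟨_, hf, fun x y => ?_⟩
    fin_cases x <;> fin_cases y <;> simp [p231] <;> order
  · refine h321 ⟨_, hf, fun x y => ?_⟩
    fin_cases x <;> fin_cases y <;> simp [p321] <;> order

theorem Equiv.Perm.card_filter_apply_lt {n : ℕ} (σ : Perm (Fin n)) (v : Fin n) :
    #{k | σ k < v} = v := by
  rw [← Fin.card_Iio v, ← card_map σ.toEmbedding]
  congr 1
  ext k
  simp [mem_map_equiv]

namespace NoTwoLargerBefore

variable {n : ℕ} {σ : Perm (Fin (n + 1))} {p : Fin (n + 1)}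

theorem apply_lt_apply (hσ : NoTwoLargerBefore σ) (hp : σ p = Fin.last n) {i j : Fin (n + 1)}
    (hpj : p < j) (hij : i < j) (hip : i ≠ p) : σ i < σ j := by
  have hj : σ j < σ p := hp ▸ Fin.lt_last_iff_ne_last.2 (hp ▸ σ.injective.ne hpj.ne')
  by_contra! h
  have h' : σ j < σ i := h.lt_of_ne (σ.injective.ne hij.ne')
  rcases hip.lt_or_gt with hip | hip
  · exact hσ hip hpj ⟨h', hj⟩
  · exact hσ hip hij ⟨hj, h'⟩

theorem apply_lt_of_lt (hσ : NoTwoLargerBefore σ) (hp : σ p = Fin.last n) {i : Fin (n + 1)}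
    (hi : i < p) : σ i < p := by
  have hsub : ({k | σ k < σ i} : Finset (Fin (n + 1))) ⊆ (Iio p).erase i := by
    intro k hk
    simp only [mem_filter, mem_univ, true_and] at hk
    refine mem_erase.2 ⟨fun hki => hk.ne (hki ▸ rfl), mem_Iio.2 ?_⟩
    by_contra! hpk
    rcases hpk.eq_or_lt with rfl | hpk
    · exact absurd (hp ▸ hk) (Fin.le_last _).not_gt
    · exact (hσ.apply_lt_apply hp hpk (hi.trans hpk) hi.ne).not_gt hk
  have := card_le_card hsub
  rw [σ.card_filter_apply_lt, card_erase_of_mem (mem_Iio.2 hi), Fin.card_Iio] at this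
  rw [Fin.lt_def]
  omega

theorem apply_succ (hσ : NoTwoLargerBefore σ) (hp : σ p = Fin.last n) {j : Fin n}
    (hj : p ≤ j.castSucc) : σ j.succ = j.castSucc := by
  have hpj : p < j.succ := hj.trans_lt Fin.castSucc_lt_succ
  have hset : ({k | σ k < σ j.succ} : Finset _) = (Iio j.succ).erase p := by
    ext k
    simp only [mem_filter, mem_univ, true_and, mem_erase, mem_Iio]
    refine ⟨fun hk => ⟨?_, ?_⟩, fun ⟨hkp, hk⟩ => hσ.apply_lt_apply hp hpj hk hkp⟩
    · rintro rfl
      exact (hp ▸ hk).not_ge (Fin.le_last _)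
    · by_contra! hk'
      rcases hk'.eq_or_lt with rfl | hk'
      · exact hk.false
      · exact (hσ.apply_lt_apply hp (hpj.trans hk') hk' hpj.ne').not_gt hk
  have := σ.card_filter_apply_lt (σ j.succ)
  rw [hset, card_erase_of_mem (mem_Iio.2 hpj), Fin.card_Iio] at this
  ext
  simp [← this]

end NoTwoLargerBefore

namespace Fin

variable {m k : ℕ} (i : Fin m) (j : Fin k)

@[simp]
theorem castAdd_lt_natAdd : castAdd k i < natAdd m j := by
  simp only [lt_def, val_castAdd, val_natAdd]
  omega

@[simp]
theorem not_natAdd_le_castAdd : ¬natAdd m j ≤ castAdd k i :=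
  (castAdd_lt_natAdd i j).not_ge

@[simp]
theorem not_natAdd_lt_castAdd : ¬natAdd m j < castAdd k i :=
  (castAdd_lt_natAdd i j).asymm

end Fin

def Equiv.Perm.directSum {m k : ℕ} (τ : Perm (Fin m)) (ρ : Perm (Fin k)) : Perm (Fin (m + k)) :=
  finSumFinEquiv.permCongr (τ.sumCongr ρ)

def IsCrossing {n : ℕ} (σ : Perm (Fin n)) (i j : Fin n) : Prop :=
  (i < j ∧ j < σ i ∧ σ i < σ j) ∨ (σ i < σ j ∧ σ j ≤ i ∧ i < j)

theorem crs_eq_sum {n : ℕ} (σ : Perm (Fin n)) :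
    crs σ = ∑ i, ∑ j, if IsCrossing σ i j then 1 else 0 := by
  rw [crs, card_filter, Fintype.sum_prod_type]
  congr!

namespace Equiv.Perm

variable {m k : ℕ} (τ : Perm (Fin m)) (ρ : Perm (Fin k))

@[simp]
theorem directSum_castAdd (i : Fin m) : τ.directSum ρ (Fin.castAdd k i) = Fin.castAdd k (τ i) := by
  simp [directSum, permCongr_apply]

@[simp]
theorem directSum_natAdd (i : Fin k) : τ.directSum ρ (Fin.natAdd m i) = Fin.natAdd m (ρ i) := by
  simp [directSum, permCongr_apply]

theorem directSum_left_injective : Function.Injective fun τ : Perm (Fin m) => τ.directSum ρ := by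
  intro τ τ' h
  ext i
  simpa using congr(($h (Fin.castAdd k i) : ℕ))

@[simp]
theorem isCrossing_directSum_castAdd_castAdd (i j : Fin m) :
    IsCrossing (τ.directSum ρ) (Fin.castAdd k i) (Fin.castAdd k j) ↔ IsCrossing τ i j := by
  simp only [IsCrossing, directSum_castAdd, (Fin.strictMono_castAdd k).lt_iff_lt,
    (Fin.strictMono_castAdd k).le_iff_le]

@[simp]
theorem isCrossing_directSum_natAdd_natAdd (i j : Fin k) :
    IsCrossing (τ.directSum ρ) (Fin.natAdd m i) (Fin.natAdd m j) ↔ IsCrossing ρ i j := by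
  simp only [IsCrossing, directSum_natAdd, Fin.natAdd_lt_natAdd_iff, Fin.natAdd_le_natAdd_iff]

@[simp]
theorem not_isCrossing_directSum_castAdd_natAdd (i : Fin m) (j : Fin k) :
    ¬IsCrossing (τ.directSum ρ) (Fin.castAdd k i) (Fin.natAdd m j) := by
  simp [IsCrossing]

@[simp]
theorem not_isCrossing_directSum_natAdd_castAdd (i : Fin k) (j : Fin m) :
    ¬IsCrossing (τ.directSum ρ) (Fin.natAdd m i) (Fin.castAdd k j) := by
  simp [IsCrossing]

theorem crs_directSum : crs (τ.directSum ρ) = crs τ + crs ρ := by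
  simp only [crs_eq_sum, Fin.sum_univ_add, isCrossing_directSum_castAdd_castAdd,
    isCrossing_directSum_natAdd_natAdd, not_isCrossing_directSum_castAdd_natAdd,
    not_isCrossing_directSum_natAdd_castAdd, if_false, sum_const_zero, add_zero, zero_add]

theorem noTwoLargerBefore_directSum_iff :
    NoTwoLargerBefore (τ.directSum ρ) ↔ NoTwoLargerBefore τ ∧ NoTwoLargerBefore ρ := by
  refine ⟨fun h => ⟨fun i₁ i₂ j h₁ h₂ => ?_, fun i₁ i₂ j h₁ h₂ => ?_⟩, fun ⟨hτ, hρ⟩ => ?_⟩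
  · simpa [(Fin.strictMono_castAdd k).lt_iff_lt, (Fin.strictMono_castAdd k).le_iff_le] using
      @h (Fin.castAdd k i₁) (Fin.castAdd k i₂) (Fin.castAdd k j)
      ((Fin.strictMono_castAdd k) h₁) ((Fin.strictMono_castAdd k) h₂)
  · simpa using @h (Fin.natAdd m i₁) (Fin.natAdd m i₂) (Fin.natAdd m j)
      ((Fin.natAdd_lt_natAdd_iff m).2 h₁) ((Fin.natAdd_lt_natAdd_iff m).2 h₂)
  · intro i₁ i₂ j h₁ h₂
    induction j using Fin.addCases <;> induction i₂ using Fin.addCases <;>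
      induction i₁ using Fin.addCases <;>
      simp only [directSum_castAdd, directSum_natAdd, (Fin.strictMono_castAdd k).lt_iff_lt,
        Fin.natAdd_lt_natAdd_iff, Fin.castAdd_lt_natAdd, Fin.not_natAdd_lt_castAdd, false_and,
        and_false, not_false_eq_true] at h₁ h₂ ⊢
    exacts [hτ h₁ h₂, hρ h₁ h₂]

end Equiv.Perm

section finRotate

variable {k : ℕ}

theorem val_finRotate_symm (i : Fin (k + 1)) :
    ((finRotate (k + 1)).symm i : ℕ) = if (i : ℕ) = 0 then k else i - 1 := by
  simp only [finRotate_symm_apply, Fin.coe_sub_one, Fin.ext_iff, Fin.val_zero]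

theorem finRotate_symm_zero : (finRotate (k + 1)).symm 0 = Fin.last k :=
  (symm_apply_eq _).2 finRotate_last.symm

theorem finRotate_symm_succ (j : Fin k) : (finRotate (k + 1)).symm j.succ = j.castSucc := by
  ext
  rw [val_finRotate_symm]
  simp

theorem noTwoLargerBefore_finRotate_symm : NoTwoLargerBefore (finRotate (k + 1)).symm := by
  intro i₁ i₂ j h₁ h₂
  simp only [Fin.lt_def, val_finRotate_symm] at *
  split_ifs <;> omega

theorem isCrossing_finRotate_symm_iff {a b : Fin (k + 1)} :
    IsCrossing (finRotate (k + 1)).symm a b ↔ 0 < (a : ℕ) ∧ (b : ℕ) = a + 1 := by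
  simp only [IsCrossing, Fin.lt_def, Fin.le_def, val_finRotate_symm]
  split_ifs <;> omega

theorem crs_finRotate_symm : crs (finRotate (k + 1)).symm = k - 1 := by
  have hcard : #(Ioo (0 : Fin (k + 1)) (Fin.last k)) = k - 1 := by simp
  rw [← hcard]
  refine card_nbij Prod.fst (fun p hp => ?_) (fun p hp q hq hpq => ?_) (fun a ha => ?_)
  · have := isCrossing_finRotate_symm_iff.1 (mem_filter.1 hp).2
    have := p.2.is_lt
    simp only [coe_Ioo, Set.mem_Ioo, Fin.lt_def, Fin.val_zero, Fin.val_last]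
    omega
  · have hp' := isCrossing_finRotate_symm_iff.1 (mem_filter.1 hp).2
    have hq' := isCrossing_finRotate_symm_iff.1 (mem_filter.1 hq).2
    exact Prod.ext hpq (Fin.ext (by rw [hp'.2, hq'.2, hpq]))
  · simp only [coe_Ioo, Set.mem_Ioo, Fin.lt_def, Fin.val_zero, Fin.val_last] at ha
    refine ⟨(a, ⟨a + 1, by omega⟩), mem_filter.2 ⟨mem_univ _, ?_⟩, rfl⟩
    exact isCrossing_finRotate_symm_iff.2 ⟨ha.1, rfl⟩

end finRotate

theorem NoTwoLargerBefore.exists_eq_directSum {m k : ℕ} {σ : Perm (Fin (m + (k + 1)))}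
    (hσ : NoTwoLargerBefore σ) (hp : σ (Fin.natAdd m 0) = Fin.last (m + k)) :
    ∃ τ : Perm (Fin m), σ = τ.directSum (finRotate (k + 1)).symm := by
  have hmaps : Set.MapsTo (finSumFinEquiv.symm.permCongr σ) (Set.range Sum.inl)
      (Set.range Sum.inl) := by
    rintro _ ⟨i, rfl⟩
    have hlt := hσ.apply_lt_of_lt hp (i := Fin.castAdd (k + 1) i) (Fin.castAdd_lt_natAdd _ _)
    rw [Fin.lt_def, Fin.val_natAdd, Fin.val_zero, add_zero] at hlt
    refine ⟨Fin.castLT _ hlt, ?_⟩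
    rw [permCongr_apply, symm_symm, finSumFinEquiv_apply_left, eq_symm_apply,
      finSumFinEquiv_apply_left]
    rfl
  obtain ⟨⟨τ, ρ⟩, hτρ⟩ := Perm.mem_sumCongrHom_range_of_perm_mapsTo_inl hmaps
  have hσ' : σ = τ.directSum ρ := by
    rw [Perm.sumCongrHom_apply] at hτρ
    rw [Perm.directSum, hτρ, ← permCongr_symm, apply_symm_apply]
  have hsucc (j : Fin k) : σ (Fin.natAdd m j.succ) = Fin.natAdd m j.castSucc :=
    hσ.apply_succ hp (j := Fin.natAdd m j) (by simp [Fin.le_def])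
  subst hσ'
  refine ⟨τ, congrArg _ (Equiv.ext fun j => ?_)⟩
  induction j using Fin.cases with
  | zero =>
    rw [finRotate_symm_zero]
    ext
    simpa using congr(($hp : ℕ))
  | succ j =>
    rw [finRotate_symm_succ]
    ext
    simpa using congr(($(hsucc j) : ℕ))

open Polynomial

theorem Fpoly_eq_sum_filter (n : ℕ) (P : Perm (Fin n) → Prop) :
    Fpoly n P = ∑ σ with P σ, X ^ crs σ := by
  rw [Fpoly, sum_filter]

theorem sum_noTwoLargerBefore_apply_natAdd_zero_eq_last (m k : ℕ) :
    ∑ σ : Perm (Fin (m + (k + 1))) with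
        NoTwoLargerBefore σ ∧ σ (Fin.natAdd m 0) = Fin.last (m + k), (X : ℤ[X]) ^ crs σ =
      X ^ (k - 1) * Fpoly m NoTwoLargerBefore := by
  rw [Fpoly_eq_sum_filter, mul_sum]
  refine (sum_bij (fun τ _ => τ.directSum (finRotate (k + 1)).symm) (fun τ hτ => ?_)
    (fun τ _ τ' _ h => Perm.directSum_left_injective _ h) (fun σ hσ => ?_) (fun τ _ => ?_)).symm
  · simp only [mem_filter, mem_univ, true_and] at hτ ⊢
    refine ⟨(Perm.noTwoLargerBefore_directSum_iff _ _).2 ⟨hτ, noTwoLargerBefore_finRotate_symm⟩,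
      ?_⟩
    rw [Perm.directSum_natAdd, finRotate_symm_zero, Fin.natAdd_last]
  · obtain ⟨hσ, hp⟩ := (mem_filter.1 hσ).2
    obtain ⟨τ, rfl⟩ := hσ.exists_eq_directSum hp
    exact ⟨τ, mem_filter.2 ⟨mem_univ _, ((Perm.noTwoLargerBefore_directSum_iff _ _).1 hσ).1⟩, rfl⟩
  · rw [Perm.crs_directSum, crs_finRotate_symm, pow_add, mul_comm]

theorem Fpoly_noTwoLargerBefore_succ (n : ℕ) :
    Fpoly (n + 1) NoTwoLargerBefore =
      ∑ m ∈ range (n + 1), X ^ (n - m - 1) * Fpoly m NoTwoLargerBefore := by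
  rw [Fpoly_eq_sum_filter, ← sum_fiberwise_of_maps_to (t := range (n + 1))
    (g := fun σ : Perm (Fin (n + 1)) => (σ.symm (Fin.last n) : ℕ))
    (fun σ _ => mem_range.2 (Fin.is_lt _))]
  refine sum_congr rfl fun m hm => ?_
  obtain ⟨k, rfl⟩ := Nat.exists_eq_add_of_le (Nat.lt_succ_iff.1 (mem_range.1 hm))
  rw [filter_filter, Nat.add_sub_cancel_left, ← sum_noTwoLargerBefore_apply_natAdd_zero_eq_last]
  refine sum_congr (filter_congr fun σ _ => and_congr_right fun _ => ?_) fun _ _ => rfl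
  rw [← eq_symm_apply, Fin.ext_iff, Fin.val_natAdd, Fin.val_zero, add_zero, eq_comm]

theorem add_two_eq_of_eq_sum {R : Type*} [CommRing R] (x : R) (G : ℕ → R)
    (hG : ∀ n, G (n + 1) = ∑ m ∈ range (n + 1), x ^ (n - m - 1) * G m) (n : ℕ) :
    G (n + 2) = (1 + x) * G (n + 1) + (1 - x) * G n := by
  have hshift : ∑ m ∈ range n, x ^ (n - m) * G m = x * ∑ m ∈ range n, x ^ (n - m - 1) * G m := by
    rw [mul_sum]
    refine sum_congr rfl fun m hm => ?_
    rw [← mul_assoc, ← pow_succ', Nat.sub_add_cancel (Nat.sub_pos_of_lt (mem_range.1 hm))]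
  have h₁ := hG (n + 1)
  have h₀ := hG n
  have hsub (m : ℕ) : n + 1 - m - 1 = n - m := by omega
  simp only [sum_range_succ, hsub, Nat.sub_self, Nat.zero_sub, Nat.sub_eq_zero_of_le n.le_succ,
    pow_zero, one_mul, hshift] at h₁ h₀
  linear_combination h₁ - x * h₀

theorem Fpoly_rec_321_231 (n : ℕ) (hn : 2 ≤ n) :
    Fpoly n (fun σ => Avoids σ p321 ∧ Avoids σ p231) =
      (1 + Polynomial.X) * Fpoly (n - 1) (fun σ => Avoids σ p321 ∧ Avoids σ p231)
        + (1 - Polynomial.X) * Fpoly (n - 2) (fun σ => Avoids σ p321 ∧ Avoids σ p231) := by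
  simp only [avoids_321_and_231_iff]
  obtain ⟨n, rfl⟩ := Nat.exists_eq_add_of_le' hn
  exact add_two_eq_of_eq_sum X (fun m => Fpoly m NoTwoLargerBefore) Fpoly_noTwoLargerBefore_succ n
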